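/- arXiv:2507.19606 — 2 statements merged into one kernel-verified Lean document; each statement's English description precedes it below -/
import Mathlib

section
/- The assignment of Fermi ellipsoids to centered generalized coherent states is injective: if X, Y, X′, Y′ are real symmetric n×n matrices with X, X′ positive definite and Ω_{XY} = Ω_{X′Y′} as subsets of ℝ^{2n}, then X = X′ and Y = Y′. Consequently the map ψ_{X,Y} ↦ Ω_{XY} is a bijection between centered generalized coherent states and Fermi ellipsoids. -/
/-!
The Fermi matrix factors as `M_{XY} = Sᵀ S` with `S = [[X, 0], [Y, I]]`, so it is positive
definite and `Ω_{XY}` is a genuine ellipsoid. Two such ellipsoids `{M z ⬝ z ≤ c}` and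
`{M' z ⬝ z ≤ c'}` coincide only if `c' M = c M'`: rescale any vector onto the boundary of one
of them. The identity block of the Fermi matrices then forces `c = c'`, hence
`M_{XY} = M_{X'Y'}`, which gives `Y = Y'` and `X² = X'²`, so `X = X'` by uniqueness of positive
square roots.

For the bijection, `|ψ_{X,Y}|` determines `X`, and the phase determines `Y x ⬝ x` modulo `4πℏ`;
since this phase scales quadratically in `x`, the ambiguity is void, so `ψ_{X,Y}` determines
`(X, Y)` and `ψ_{X,Y} ↦ Ω_{XY}` is well defined.
-/

open Matrix

/-- The generalized (centered) coherent state
`ψ_{X,Y}(x) = (det X/(πℏ)ⁿ)^{1/4} exp(−(1/2ℏ)(X+iY)x·x)`. -/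
noncomputable def gaussianState (n : ℕ) (ℏ : ℝ) (X Y : Matrix (Fin n) (Fin n) ℝ)
    (x : Fin n → ℝ) : ℂ :=
  (((X.det / (Real.pi * ℏ) ^ n) ^ ((1 : ℝ) / 4) : ℝ) : ℂ) *
    Complex.exp (-(1 / (2 * (ℏ : ℂ))) *
      ∑ j, ∑ k, ((X j k : ℂ) + Complex.I * (Y j k : ℂ)) * (x j : ℂ) * (x k : ℂ))

/-- The Fermi matrix `M_{XY} = [[X² + Y², Y],[Y, I]]`. -/
def fermiMatrix {n : ℕ} (X Y : Matrix (Fin n) (Fin n) ℝ) :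
    Matrix (Fin n ⊕ Fin n) (Fin n ⊕ Fin n) ℝ :=
  fromBlocks (X * X + Y * Y) Y Y 1

/-- The Fermi ellipsoid `Ω_{XY} = {z : M_{XY} z·z ≤ ℏ Tr X}`. -/
def fermiEllipsoid (n : ℕ) (ℏ : ℝ) (X Y : Matrix (Fin n) (Fin n) ℝ) :
    Set (Fin n ⊕ Fin n → ℝ) :=
  {z | z ⬝ᵥ (fermiMatrix X Y).mulVec z ≤ ℏ * X.trace}

lemma Matrix.PosDef.isSymm {ι : Type*} {A : Matrix ι ι ℝ} (hA : A.PosDef) : A.IsSymm :=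
  isHermitian_iff_isSymm.mp hA.isHermitian

section QuadraticForm

variable {ι : Type*} [Fintype ι]

lemma Matrix.PosDef.dotProduct_mulVec_pos' {A : Matrix ι ι ℝ} (hA : A.PosDef) {z : ι → ℝ}
    (hz : z ≠ 0) : 0 < z ⬝ᵥ A *ᵥ z := by
  simpa using hA.dotProduct_mulVec_pos hz

lemma Matrix.smul_dotProduct_mulVec_smul {R : Type*} [CommSemiring R] (A : Matrix ι ι R)
    (t : R) (z : ι → R) : (t • z) ⬝ᵥ A *ᵥ (t • z) = t * t * (z ⬝ᵥ A *ᵥ z) := by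
  rw [mulVec_smul, dotProduct_smul, smul_dotProduct, smul_eq_mul, smul_eq_mul, mul_assoc]

lemma Matrix.IsSymm.ext_of_dotProduct_mulVec [DecidableEq ι] {A B : Matrix ι ι ℝ}
    (hA : A.IsSymm) (hB : B.IsSymm) (h : ∀ z, z ⬝ᵥ A *ᵥ z = z ⬝ᵥ B *ᵥ z) : A = B := by
  have diag (M : Matrix ι ι ℝ) (i : ι) : Pi.single i 1 ⬝ᵥ M *ᵥ Pi.single i 1 = M i i := by
    simp [single_dotProduct, mulVec_single]
  have pair (M : Matrix ι ι ℝ) (i j : ι) :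
      (Pi.single i 1 + Pi.single j 1) ⬝ᵥ M *ᵥ (Pi.single i 1 + Pi.single j 1)
        = M i i + M i j + (M j i + M j j) := by
    simp [mulVec_add, dotProduct_add, add_dotProduct, single_dotProduct, mulVec_single]
    ring
  ext i j
  have hij := h (Pi.single i 1 + Pi.single j 1)
  have hi := h (Pi.single i 1)
  have hj := h (Pi.single j 1)
  rw [pair, pair] at hij
  rw [diag, diag] at hi hj
  linarith [hA.apply i j, hB.apply i j]

def Matrix.quadraticSublevel (A : Matrix ι ι ℝ) (c : ℝ) : Set (ι → ℝ) :=
  {z | z ⬝ᵥ A *ᵥ z ≤ c}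

lemma Matrix.PosDef.mul_dotProduct_mulVec_le_of_quadraticSublevel_subset {A B : Matrix ι ι ℝ}
    (hA : A.PosDef) {d d' : ℝ} (hd : 0 < d)
    (h : A.quadraticSublevel d ⊆ B.quadraticSublevel d') (z : ι → ℝ) :
    d * (z ⬝ᵥ B *ᵥ z) ≤ d' * (z ⬝ᵥ A *ᵥ z) := by
  rcases eq_or_ne z 0 with rfl | hz
  · simp
  have hq := hA.dotProduct_mulVec_pos' hz
  -- rescale `z` onto the boundary of the first ellipsoid
  have ht : √(d / z ⬝ᵥ A *ᵥ z) * √(d / z ⬝ᵥ A *ᵥ z) = d / z ⬝ᵥ A *ᵥ z :=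
    Real.mul_self_sqrt (div_pos hd hq).le
  have hmem := h (show √(d / z ⬝ᵥ A *ᵥ z) • z ∈ A.quadraticSublevel d by
    simp only [quadraticSublevel, Set.mem_ofPred_eq, smul_dotProduct_mulVec_smul, ht,
      div_mul_cancel₀ _ hq.ne', le_refl])
  simp only [quadraticSublevel, Set.mem_ofPred_eq, smul_dotProduct_mulVec_smul, ht] at hmem
  rwa [div_mul_eq_mul_div, div_le_iff₀ hq] at hmem

lemma Matrix.PosDef.smul_eq_smul_of_quadraticSublevel_eq [DecidableEq ι] {A B : Matrix ι ι ℝ}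
    (hA : A.PosDef) (hB : B.PosDef) {d d' : ℝ} (hd : 0 < d) (hd' : 0 < d')
    (h : A.quadraticSublevel d = B.quadraticSublevel d') : d' • A = d • B := by
  refine (hA.isSymm.smul d').ext_of_dotProduct_mulVec (hB.isSymm.smul d) fun z => ?_
  simp only [smul_mulVec, dotProduct_smul, smul_eq_mul]
  exact le_antisymm (hB.mul_dotProduct_mulVec_le_of_quadraticSublevel_subset hd' h.ge z)
    (hA.mul_dotProduct_mulVec_le_of_quadraticSublevel_subset hd h.le z)

lemma sum_sum_mul_mul_eq_dotProduct_mulVec {R : Type*} [CommSemiring R]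
    (A : Matrix ι ι R) (x : ι → R) : ∑ j, ∑ k, A j k * x j * x k = x ⬝ᵥ A *ᵥ x := by
  simp only [dotProduct, mulVec, Finset.mul_sum]
  exact Finset.sum_congr rfl fun j _ => Finset.sum_congr rfl fun k _ => by ring

end QuadraticForm

lemma eq_zero_of_forall_mul_self_mul_eq_int_mul {c p : ℝ} (hp : p ≠ 0)
    (h : ∀ t : ℝ, ∃ k : ℤ, t * t * c = k * p) : c = 0 := by
  by_contra hc
  have hs : 0 ≤ |p| / (2 * |c|) := by positivity
  obtain ⟨k, hk⟩ := h √(|p| / (2 * |c|))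
  rw [Real.mul_self_sqrt hs] at hk
  -- `|k| * |p| = |p| / 2`, impossible for an integer `k`
  have habs := congrArg abs hk
  rw [abs_mul, abs_div, abs_abs, abs_mul, abs_two, abs_abs, div_mul_eq_mul_div, mul_comm 2,
    ← div_div, mul_div_cancel_right₀ _ (abs_ne_zero.mpr hc), abs_mul, ← Int.cast_abs] at habs
  have h2k : (2 * |k| : ℝ) = 1 := by
    field_simp at habs
    nlinarith [abs_pos.mpr hp]
  have : 2 * |k| = 1 := by exact_mod_cast h2k
  omega

section Fermi

lemma fermiEllipsoid_eq_quadraticSublevel (n : ℕ) (ℏ : ℝ) (X Y : Matrix (Fin n) (Fin n) ℝ) :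
    fermiEllipsoid n ℏ X Y = (fermiMatrix X Y).quadraticSublevel (ℏ * X.trace) :=
  rfl

variable {n : ℕ} {X Y X' Y' : Matrix (Fin n) (Fin n) ℝ}

lemma fermiMatrix_eq_transpose_mul_self (hX : X.IsSymm) (hY : Y.IsSymm) :
    fermiMatrix X Y = (fromBlocks X 0 Y 1)ᵀ * fromBlocks X 0 Y 1 := by
  rw [fromBlocks_transpose, fromBlocks_multiply, hX.eq, hY.eq]
  simp [fermiMatrix]

lemma fermiMatrix_posDef (hX : X.PosDef) (hY : Y.IsSymm) : (fermiMatrix X Y).PosDef := by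
  have hS : Function.Injective (fromBlocks X 0 Y (1 : Matrix (Fin n) (Fin n) ℝ)).mulVec := by
    rw [mulVec_injective_iff_isUnit, isUnit_iff_isUnit_det, det_fromBlocks_zero₁₂, det_one,
      mul_one]
    exact hX.det_pos.ne'.isUnit
  simpa [fermiMatrix_eq_transpose_mul_self hX.isSymm hY] using
    PosDef.one.conjTranspose_mul_mul_same hS

open scoped MatrixOrder in
lemma fermiMatrix_injective (hX : X.PosDef) (hX' : X'.PosDef)
    (h : fermiMatrix X Y = fermiMatrix X' Y') : X = X' ∧ Y = Y' := by
  obtain ⟨hXY, hY, -, -⟩ := fromBlocks_inj.mp h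
  refine ⟨?_, hY⟩
  rw [hY, add_left_inj] at hXY
  exact (CFC.mul_self_eq_mul_self_iff X X' hX.posSemidef.nonneg hX'.posSemidef.nonneg).mp hXY

lemma fermiEllipsoid_injective {ℏ : ℝ} (hℏ : 0 < ℏ) (hX : X.PosDef) (hY : Y.IsSymm)
    (hX' : X'.PosDef) (hY' : Y'.IsSymm) (h : fermiEllipsoid n ℏ X Y = fermiEllipsoid n ℏ X' Y') :
    X = X' ∧ Y = Y' := by
  rw [fermiEllipsoid_eq_quadraticSublevel, fermiEllipsoid_eq_quadraticSublevel] at h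
  rcases isEmpty_or_nonempty (Fin n) with hn | hn
  · exact ⟨Subsingleton.elim _ _, Subsingleton.elim _ _⟩
  have hd := mul_pos hℏ hX.trace_pos
  have hd' := mul_pos hℏ hX'.trace_pos
  have hM := (fermiMatrix_posDef hX hY).smul_eq_smul_of_quadraticSublevel_eq
    (fermiMatrix_posDef hX' hY') hd hd' h
  -- the lower right block of both Fermi matrices is the identity
  obtain ⟨i⟩ := hn
  have hdd : ℏ * X'.trace = ℏ * X.trace := by
    simpa [fermiMatrix] using congrFun₂ hM (Sum.inr i) (Sum.inr i)
  rw [hdd] at hM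
  exact fermiMatrix_injective hX hX' (smul_right_injective _ hd.ne' hM)

end Fermi

section Gaussian

lemma gaussianState_apply (n : ℕ) (ℏ : ℝ) (X Y : Matrix (Fin n) (Fin n) ℝ) (x : Fin n → ℝ) :
    gaussianState n ℏ X Y x = ((X.det / (Real.pi * ℏ) ^ n) ^ ((1 : ℝ) / 4) : ℝ) *
      Complex.exp (((-(x ⬝ᵥ X *ᵥ x) / (2 * ℏ) : ℝ) : ℂ)
        + ((-(x ⬝ᵥ Y *ᵥ x) / (2 * ℏ) : ℝ) : ℂ) * Complex.I) := by
  have hsum : ∑ j, ∑ k, ((X j k : ℂ) + Complex.I * (Y j k : ℂ)) * (x j : ℂ) * (x k : ℂ)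
      = ∑ j, ∑ k, (X j k : ℂ) * x j * x k + Complex.I * ∑ j, ∑ k, (Y j k : ℂ) * x j * x k := by
    simp only [Finset.mul_sum, ← Finset.sum_add_distrib]
    exact Finset.sum_congr rfl fun j _ => Finset.sum_congr rfl fun k _ => by ring
  rw [gaussianState, hsum]
  simp only [← Complex.ofReal_mul, ← Complex.ofReal_sum, sum_sum_mul_mul_eq_dotProduct_mulVec]
  push_cast
  ring_nf

lemma gaussianState_zero (n : ℕ) (ℏ : ℝ) (X Y : Matrix (Fin n) (Fin n) ℝ) :
    gaussianState n ℏ X Y 0 = ((X.det / (Real.pi * ℏ) ^ n) ^ ((1 : ℝ) / 4) : ℝ) := by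
  simp [gaussianState]

variable {n : ℕ} {ℏ : ℝ} {X Y X' Y' : Matrix (Fin n) (Fin n) ℝ}

lemma dotProduct_mulVec_eq_of_gaussianState_eq (hℏ : 0 < ℏ) (hX : X.PosDef)
    (h : gaussianState n ℏ X Y = gaussianState n ℏ X' Y') (x : Fin n → ℝ) :
    x ⬝ᵥ X *ᵥ x = x ⬝ᵥ X' *ᵥ x ∧
      ∃ k : ℤ, x ⬝ᵥ Y *ᵥ x - x ⬝ᵥ Y' *ᵥ x = k * (4 * Real.pi * ℏ) := by
  have hamp := congrFun h 0
  rw [gaussianState_zero, gaussianState_zero] at hamp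
  have hamp_ne : (((X.det / (Real.pi * ℏ) ^ n) ^ ((1 : ℝ) / 4) : ℝ) : ℂ) ≠ 0 := by
    have := hX.det_pos
    exact_mod_cast (by positivity : (0 : ℝ) < _).ne'
  have hx := congrFun h x
  rw [gaussianState_apply, gaussianState_apply, hamp, mul_right_inj' (hamp ▸ hamp_ne),
    Complex.exp_eq_exp_iff_exists_int] at hx
  obtain ⟨k, hk⟩ := hx
  have hre := congrArg Complex.re hk
  have him := congrArg Complex.im hk
  simp only [Complex.add_re, Complex.add_im, Complex.mul_re, Complex.mul_im, Complex.ofReal_re,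
    Complex.ofReal_im, Complex.I_re, Complex.I_im, Complex.intCast_re, Complex.intCast_im,
    Complex.re_ofNat, Complex.im_ofNat] at hre him
  ring_nf at hre him
  refine ⟨by field_simp at hre; linarith, -k, ?_⟩
  field_simp at him
  push_cast
  linarith

lemma gaussianState_injective (hℏ : 0 < ℏ) (hX : X.PosDef) (hY : Y.IsSymm) (hX' : X'.PosDef)
    (hY' : Y'.IsSymm) (h : gaussianState n ℏ X Y = gaussianState n ℏ X' Y') :
    X = X' ∧ Y = Y' := by
  have key := dotProduct_mulVec_eq_of_gaussianState_eq hℏ hX h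
  refine ⟨hX.isSymm.ext_of_dotProduct_mulVec hX'.isSymm fun x => (key x).1,
    hY.ext_of_dotProduct_mulVec hY' fun x => ?_⟩
  refine sub_eq_zero.mp (eq_zero_of_forall_mul_self_mul_eq_int_mul
    (p := 4 * Real.pi * ℏ) (by positivity) fun t => ?_)
  simpa only [smul_dotProduct_mulVec_smul, mul_sub] using (key (t • x)).2

end Gaussian

section StateToEllipsoid

variable {n : ℕ} {ℏ : ℝ} {X Y : Matrix (Fin n) (Fin n) ℝ}

open Classical in
/-- `ψ_{X,Y} ↦ Ω_{XY}`, with junk value `∅` off the coherent states. -/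
noncomputable def fermiEllipsoidOfState (n : ℕ) (ℏ : ℝ) (ψ : (Fin n → ℝ) → ℂ) :
    Set (Fin n ⊕ Fin n → ℝ) :=
  if h : ∃ X Y : Matrix (Fin n) (Fin n) ℝ, X.PosDef ∧ Y.IsSymm ∧ ψ = gaussianState n ℏ X Y
  then fermiEllipsoid n ℏ h.choose h.choose_spec.choose else ∅

lemma fermiEllipsoidOfState_gaussianState (hℏ : 0 < ℏ) (hX : X.PosDef) (hY : Y.IsSymm) :
    fermiEllipsoidOfState n ℏ (gaussianState n ℏ X Y) = fermiEllipsoid n ℏ X Y := by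
  have h : ∃ X' Y' : Matrix (Fin n) (Fin n) ℝ,
      X'.PosDef ∧ Y'.IsSymm ∧ gaussianState n ℏ X Y = gaussianState n ℏ X' Y' :=
    ⟨X, Y, hX, hY, rfl⟩
  obtain ⟨hX', hY', h'⟩ := h.choose_spec.choose_spec
  obtain ⟨hXX', hYY'⟩ := gaussianState_injective hℏ hX hY hX' hY' h'
  rw [fermiEllipsoidOfState, dif_pos h]
  exact congrArg₂ (fermiEllipsoid n ℏ) hXX'.symm hYY'.symm

end StateToEllipsoid

theorem fermi_ellipsoid_bijection_general (n : ℕ) (ℏ : ℝ) (hℏ : 0 < ℏ) :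
    (∀ X Y X' Y' : Matrix (Fin n) (Fin n) ℝ,
        X.IsSymm → Y.IsSymm → X'.IsSymm → Y'.IsSymm → X.PosDef → X'.PosDef →
        fermiEllipsoid n ℏ X Y = fermiEllipsoid n ℏ X' Y' → X = X' ∧ Y = Y') ∧
      ∃ Φ : ((Fin n → ℝ) → ℂ) → Set (Fin n ⊕ Fin n → ℝ),
        (∀ X Y : Matrix (Fin n) (Fin n) ℝ, X.IsSymm → Y.IsSymm → X.PosDef →
          Φ (gaussianState n ℏ X Y) = fermiEllipsoid n ℏ X Y) ∧
        Set.BijOn Φ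
          {ψ | ∃ X Y : Matrix (Fin n) (Fin n) ℝ,
            X.IsSymm ∧ Y.IsSymm ∧ X.PosDef ∧ ψ = gaussianState n ℏ X Y}
          {Ω | ∃ X Y : Matrix (Fin n) (Fin n) ℝ,
            X.IsSymm ∧ Y.IsSymm ∧ X.PosDef ∧ Ω = fermiEllipsoid n ℏ X Y} := by
  have hΦ (X Y : Matrix (Fin n) (Fin n) ℝ) (hY : Y.IsSymm) (hX : X.PosDef) :
      fermiEllipsoidOfState n ℏ (gaussianState n ℏ X Y) = fermiEllipsoid n ℏ X Y :=
    fermiEllipsoidOfState_gaussianState hℏ hX hY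
  refine ⟨fun _ _ _ _ _ hY _ hY' hX hX' => fermiEllipsoid_injective hℏ hX hY hX' hY',
    fermiEllipsoidOfState n ℏ, fun X Y _ hY hX => hΦ X Y hY hX, ?_, ?_, ?_⟩
  · rintro _ ⟨X, Y, hXs, hY, hX, rfl⟩
    exact ⟨X, Y, hXs, hY, hX, hΦ X Y hY hX⟩
  · rintro _ ⟨X, Y, -, hY, hX, rfl⟩ _ ⟨X', Y', -, hY', hX', rfl⟩ h
    rw [hΦ X Y hY hX, hΦ X' Y' hY' hX'] at h
    obtain ⟨rfl, rfl⟩ := fermiEllipsoid_injective hℏ hX hY hX' hY' h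
    rfl
  · rintro _ ⟨X, Y, hXs, hY, hX, rfl⟩
    exact ⟨_, ⟨X, Y, hXs, hY, hX, rfl⟩, hΦ X Y hY hX⟩

/-- The assignment of Fermi ellipsoids to centered generalized coherent states is injective
(`Ω_{XY} = Ω_{X′Y′}` forces `X = X′` and `Y = Y′`), and consequently `ψ_{X,Y} ↦ Ω_{XY}` is a
bijection between centered generalized coherent states and Fermi ellipsoids. -/
theorem fermi_ellipsoid_bijection (n : ℕ) (hn : 1 ≤ n) (ℏ : ℝ) (hℏ : 0 < ℏ) :
    (∀ X Y X' Y' : Matrix (Fin n) (Fin n) ℝ,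
        X.IsSymm → Y.IsSymm → X'.IsSymm → Y'.IsSymm → X.PosDef → X'.PosDef →
        fermiEllipsoid n ℏ X Y = fermiEllipsoid n ℏ X' Y' → X = X' ∧ Y = Y') ∧
      ∃ Φ : ((Fin n → ℝ) → ℂ) → Set (Fin n ⊕ Fin n → ℝ),
        (∀ X Y : Matrix (Fin n) (Fin n) ℝ, X.IsSymm → Y.IsSymm → X.PosDef →
          Φ (gaussianState n ℏ X Y) = fermiEllipsoid n ℏ X Y) ∧
        Set.BijOn Φ
          {ψ | ∃ X Y : Matrix (Fin n) (Fin n) ℝ,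
            X.IsSymm ∧ Y.IsSymm ∧ X.PosDef ∧ ψ = gaussianState n ℏ X Y}
          {Ω | ∃ X Y : Matrix (Fin n) (Fin n) ℝ,
            X.IsSymm ∧ Y.IsSymm ∧ X.PosDef ∧ Ω = fermiEllipsoid n ℏ X Y} :=
  fermi_ellipsoid_bijection_general n ℏ hℏ
end

section
/- (Pre-Iwasawa decomposition.) Let S = [[A, B],[C, D]] be a symplectic 2n×2n matrix written in n×n blocks. Then there exist unique matrices P, L, R such that S = V_P M_L R, where P is real symmetric, L is real symmetric positive definite, R is both symplectic and orthogonal, V_P = [[I, 0],[−P, I]] and M_L = [[L⁻¹, 0],[0, L]]. Moreover L = (AAᵀ + BBᵀ)^{−1/2}, P = −(CAᵀ + DBᵀ)(AAᵀ + BBᵀ)^{−1}, and R = [[U, V],[−V, U]] with U = (AAᵀ + BBᵀ)^{−1/2} A and V = (AAᵀ + BBᵀ)^{−1/2} B. -/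
open Matrix

/-- The standard symplectic matrix `J = [[0, I],[−I, 0]]`. -/
def stdJ (n : ℕ) : Matrix (Fin n ⊕ Fin n) (Fin n ⊕ Fin n) ℝ :=
  fromBlocks 0 1 (-1) 0

/-- A real `2n×2n` matrix is symplectic if `Sᵀ J S = J`. -/
def IsSymplecticMat {n : ℕ} (S : Matrix (Fin n ⊕ Fin n) (Fin n ⊕ Fin n) ℝ) : Prop :=
  Sᵀ * stdJ n * S = stdJ n

/-- `V_P = [[I, 0],[−P, I]]`. -/
def VP {n : ℕ} (P : Matrix (Fin n) (Fin n) ℝ) : Matrix (Fin n ⊕ Fin n) (Fin n ⊕ Fin n) ℝ :=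
  fromBlocks 1 0 (-P) 1

/-- `M_L = [[L⁻¹, 0],[0, L]]`. -/
noncomputable def ML {n : ℕ} (L : Matrix (Fin n) (Fin n) ℝ) : Matrix (Fin n ⊕ Fin n) (Fin n ⊕ Fin n) ℝ :=
  fromBlocks L⁻¹ 0 0 L

/-- The pre-Iwasawa decomposition conditions for `S = [[A,B],[C,D]]`: `S = V_P M_L R` with `P`
symmetric, `L` symmetric positive definite, and `R` symplectic and orthogonal. -/
def PreIwasawaDecomp {n : ℕ} (A B C D : Matrix (Fin n) (Fin n) ℝ)
    (PLR : Matrix (Fin n) (Fin n) ℝ × Matrix (Fin n) (Fin n) ℝ ×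
      Matrix (Fin n ⊕ Fin n) (Fin n ⊕ Fin n) ℝ) : Prop :=
  PLR.1.IsSymm ∧ PLR.2.1.IsSymm ∧ PLR.2.1.PosDef ∧ IsSymplecticMat PLR.2.2 ∧
    PLR.2.2ᵀ * PLR.2.2 = 1 ∧ fromBlocks A B C D = VP PLR.1 * ML PLR.2.1 * PLR.2.2

/-!
If `S = V_P M_L R` with `R` orthogonal, then `S Sᵀ = W Wᵀ` for `W = V_P M_L`, and the left blocks
of `W Wᵀ` are `L⁻²` and `-P L⁻²`; this forces `L⁻² = AAᵀ + BBᵀ` and `P = -(CAᵀ + DBᵀ) L²`.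
An orthogonal symplectic `R` commutes with `J`, so it is `[[U, V], [-V, U]]` and is determined by
its top row, which `S = W R` identifies as `L [A B]`. Conversely, `S Sᵀ` is symmetric, positive
definite and symplectic, and the symplectic relations between its blocks are exactly what is needed
to factor it as `W Wᵀ` with `P`, `L` given by these formulas; then `R = W⁻¹ S` is symplectic, and
orthogonal because `S Sᵀ = W Wᵀ`.
-/

section SymplecticGroup

variable {l K : Type*} [Fintype l] [DecidableEq l] [CommRing K]

theorem SymplecticGroup.nonsing_inv_mem {S : Matrix (l ⊕ l) (l ⊕ l) K}
    (hS : S ∈ symplecticGroup l K) : S⁻¹ ∈ symplecticGroup l K := by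
  simpa [SymplecticGroup.coe_inv'] using (⟨S, hS⟩⁻¹ : symplecticGroup l K).2

theorem SymplecticGroup.commute_J_of_transpose_mul_self_eq_one {R : Matrix (l ⊕ l) (l ⊕ l) K}
    (hR : R ∈ symplecticGroup l K) (hRo : Rᵀ * R = 1) : Commute (J l K) R := by
  calc J l K * R = R * J l K * Rᵀ * R := by rw [SymplecticGroup.mem_iff.mp hR]
    _ = R * J l K := by rw [mul_assoc, hRo, mul_one]

theorem exists_eq_fromBlocks_of_commute_J {R : Matrix (l ⊕ l) (l ⊕ l) K}
    (h : Commute (J l K) R) : ∃ U V, R = fromBlocks U V (-V) U := by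
  rw [← fromBlocks_toBlocks R] at h ⊢
  simp only [Commute, SemiconjBy, J, fromBlocks_multiply, fromBlocks_inj] at h
  simp only [Matrix.zero_mul, Matrix.neg_mul, Matrix.one_mul, zero_add, add_zero,
    Matrix.mul_zero, Matrix.mul_neg, Matrix.mul_one] at h
  exact ⟨R.toBlocks₁₁, R.toBlocks₁₂, by rw [← h.1, neg_neg, ← h.2.2.1]⟩

end SymplecticGroup

theorem fromBlocks_mul_transpose_self {l m o K : Type*} [Fintype l] [Fintype m] [CommRing K]
    (A : Matrix l l K) (B : Matrix l m K) (C : Matrix o l K) (D : Matrix o m K) :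
    fromBlocks A B C D * (fromBlocks A B C D)ᵀ =
      fromBlocks (A * Aᵀ + B * Bᵀ) (A * Cᵀ + B * Dᵀ) (C * Aᵀ + D * Bᵀ) (C * Cᵀ + D * Dᵀ) := by
  rw [fromBlocks_transpose, fromBlocks_multiply]

theorem transpose_mul_self_eq_one_of_mul_transpose_eq {m K : Type*} [Fintype m] [DecidableEq m]
    [CommRing K] {S W : Matrix m m K} (hW : IsUnit W.det) (h : S * Sᵀ = W * Wᵀ) :
    (W⁻¹ * S)ᵀ * (W⁻¹ * S) = 1 := by
  refine mul_eq_one_comm.mp ?_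
  have hWt : IsUnit Wᵀ.det := by rwa [det_transpose]
  rw [transpose_mul, transpose_nonsing_inv, mul_assoc, ← mul_assoc S, h, mul_assoc W,
    mul_nonsing_inv _ hWt, mul_one, nonsing_inv_mul _ hW]

theorem Matrix.PosDef.eq_of_mul_self_eq {m : Type*} [Fintype m] [DecidableEq m]
    {L L' : Matrix m m ℝ} (hL : L.PosDef) (hL' : L'.PosDef) (h : L * L = L' * L') : L = L' := by
  open MatrixOrder in
  exact (CFC.mul_self_eq_mul_self_iff L L' hL.posSemidef.nonneg hL'.posSemidef.nonneg).mp h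

theorem Matrix.PosDef.exists_posDef_mul_self_eq {m : Type*} [Fintype m] [DecidableEq m]
    {M : Matrix m m ℝ} (hM : M.PosDef) : ∃ L : Matrix m m ℝ, L.PosDef ∧ L * L = M := by
  open MatrixOrder in
  exact ⟨CFC.sqrt M, (IsStrictlyPositive.sqrt M hM.isStrictlyPositive).posDef,
    CFC.sqrt_mul_sqrt_self M hM.posSemidef.nonneg⟩

theorem posDef_mul_transpose_add_mul_transpose {l o : Type*} [Fintype l] [Fintype o]
    [DecidableEq l] [DecidableEq o] {A : Matrix l l ℝ} {B : Matrix l o ℝ} {C : Matrix o l ℝ}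
    {D : Matrix o o ℝ} (hS : IsUnit (fromBlocks A B C D)) : (A * Aᵀ + B * Bᵀ).PosDef := by
  have hSSt := PosDef.mul_conjTranspose_self _ (vecMul_injective_iff_isUnit.mpr hS)
  rw [conjTranspose_eq_transpose_of_trivial, fromBlocks_mul_transpose_self] at hSSt
  exact hSSt.submatrix Sum.inl_injective

theorem stdJ_eq_neg_J (n : ℕ) : stdJ n = -J (Fin n) ℝ := by
  simp [stdJ, J, fromBlocks_neg]

theorem isSymplecticMat_iff {n : ℕ} {S : Matrix (Fin n ⊕ Fin n) (Fin n ⊕ Fin n) ℝ} :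
    IsSymplecticMat S ↔ S ∈ symplecticGroup (Fin n) ℝ := by
  simp [IsSymplecticMat, stdJ_eq_neg_J, SymplecticGroup.mem_iff']

section VPML

variable {n : ℕ} {P L : Matrix (Fin n) (Fin n) ℝ}

theorem VP_mem_symplecticGroup (hP : P.IsSymm) : VP P ∈ symplecticGroup (Fin n) ℝ := by
  simp [VP, SymplecticGroup.fromBlocks_mem_iff, hP.eq]

theorem ML_mem_symplecticGroup (hL : L.IsSymm) (hLdet : IsUnit L.det) :
    ML L ∈ symplecticGroup (Fin n) ℝ := by
  simp [ML, SymplecticGroup.fromBlocks_mem_iff, transpose_nonsing_inv, hL.eq,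
    nonsing_inv_mul _ hLdet]

theorem VP_mul_ML : VP P * ML L = fromBlocks L⁻¹ 0 (-(P * L⁻¹)) L := by
  simp [VP, ML, fromBlocks_multiply]

theorem VP_mul_ML_mul_transpose (hP : P.IsSymm) (hL : L.IsSymm) :
    VP P * ML L * (VP P * ML L)ᵀ = fromBlocks (L⁻¹ * L⁻¹) (-(L⁻¹ * L⁻¹ * P))
      (-(P * (L⁻¹ * L⁻¹))) (P * (L⁻¹ * L⁻¹) * P + L * L) := by
  rw [VP_mul_ML, fromBlocks_mul_transpose_self]
  simp [transpose_nonsing_inv, hL.eq, hP.eq, mul_assoc]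

end VPML

section SymmetricSymplectic

variable {n : ℕ} {M Y N : Matrix (Fin n) (Fin n) ℝ}

theorem mul_inv_eq_inv_mul_transpose (hG : fromBlocks M Yᵀ Y N ∈ symplecticGroup (Fin n) ℝ)
    (hM : M.IsSymm) (hMdet : IsUnit M.det) : Y * M⁻¹ = M⁻¹ * Yᵀ := by
  have hMY : M * Y = Yᵀ * M := by
    simpa [hM.eq] using (SymplecticGroup.fromBlocks_mem_iff.mp hG).1
  calc Y * M⁻¹ = M⁻¹ * (M * Y) * M⁻¹ := by rw [nonsing_inv_mul_cancel_left _ _ hMdet]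
    _ = M⁻¹ * Yᵀ := by rw [hMY, mul_assoc, mul_assoc, mul_nonsing_inv _ hMdet, mul_one]

theorem isSymm_neg_mul_inv (hG : fromBlocks M Yᵀ Y N ∈ symplecticGroup (Fin n) ℝ)
    (hM : M.IsSymm) (hMdet : IsUnit M.det) : (-(Y * M⁻¹)).IsSymm := by
  rw [IsSymm, transpose_neg, transpose_mul, transpose_nonsing_inv, hM.eq,
    mul_inv_eq_inv_mul_transpose hG hM hMdet]

theorem fromBlocks_eq_VP_mul_ML_mul_transpose
    (hG : fromBlocks M Yᵀ Y N ∈ symplecticGroup (Fin n) ℝ) (hM : M.IsSymm) (hMdet : IsUnit M.det)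
    {L : Matrix (Fin n) (Fin n) ℝ} (hL : L.IsSymm) (hLL : L * L = M⁻¹) :
    fromBlocks M Yᵀ Y N = VP (-(Y * M⁻¹)) * ML L * (VP (-(Y * M⁻¹)) * ML L)ᵀ := by
  have hcomm := mul_inv_eq_inv_mul_transpose hG hM hMdet
  have hMN : M * N - Yᵀ * Yᵀ = 1 := by
    simpa [hM.eq] using (SymplecticGroup.fromBlocks_mem_iff.mp hG).2.2
  have hK : L⁻¹ * L⁻¹ = M := by
    rw [← Matrix.mul_inv_rev, hLL, nonsing_inv_nonsing_inv _ hMdet]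
  rw [VP_mul_ML_mul_transpose (isSymm_neg_mul_inv hG hM hMdet) hL, hK, hLL]
  congr 1
  · rw [hcomm, mul_neg, neg_neg, mul_nonsing_inv_cancel_left _ _ hMdet]
  · rw [neg_mul, neg_neg, mul_assoc, nonsing_inv_mul _ hMdet, mul_one]
  · calc N = M⁻¹ * (M * N) := (nonsing_inv_mul_cancel_left _ _ hMdet).symm
      _ = M⁻¹ * (1 + Yᵀ * Yᵀ) := by rw [← hMN, sub_add_cancel]
      _ = -(Y * M⁻¹) * M * -(M⁻¹ * Yᵀ) + M⁻¹ := by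
        rw [neg_mul, neg_mul_neg, nonsing_inv_mul_cancel_right _ _ hMdet, ← mul_assoc, hcomm,
          mul_assoc, mul_add, mul_one, add_comm]
      _ = -(Y * M⁻¹) * M * -(Y * M⁻¹) + M⁻¹ := by rw [hcomm]

end SymmetricSymplectic

theorem exists_preIwasawaDecomp {n : ℕ} {A B C D : Matrix (Fin n) (Fin n) ℝ}
    (hS : IsSymplecticMat (fromBlocks A B C D)) :
    ∃ P L R, PreIwasawaDecomp A B C D (P, L, R) := by
  set S := fromBlocks A B C D
  set M := A * Aᵀ + B * Bᵀ
  set Y := C * Aᵀ + D * Bᵀ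
  have hSG := isSymplecticMat_iff.mp hS
  have hSSt : S * Sᵀ = fromBlocks M Yᵀ Y (C * Cᵀ + D * Dᵀ) := by
    simp [S, M, Y, fromBlocks_mul_transpose_self, transpose_add, transpose_mul]
  have hG : fromBlocks M Yᵀ Y (C * Cᵀ + D * Dᵀ) ∈ symplecticGroup (Fin n) ℝ :=
    hSSt ▸ mul_mem hSG (SymplecticGroup.transpose_mem hSG)
  have hM : M.PosDef := posDef_mul_transpose_add_mul_transpose
    ((isUnit_iff_isUnit_det _).mpr (SymplecticGroup.symplectic_det hSG))
  have hMdet : IsUnit M.det := (isUnit_iff_isUnit_det M).mp hM.isUnit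
  have hMsymm : M.IsSymm := isHermitian_iff_isSymm.mp hM.isHermitian
  obtain ⟨L, hL, hLL⟩ := hM.inv.exists_posDef_mul_self_eq
  have hLsymm : L.IsSymm := isHermitian_iff_isSymm.mp hL.isHermitian
  have hP := isSymm_neg_mul_inv hG hMsymm hMdet
  set W := VP (-(Y * M⁻¹)) * ML L
  have hW : W ∈ symplecticGroup (Fin n) ℝ := mul_mem (VP_mem_symplecticGroup hP)
    (ML_mem_symplecticGroup hLsymm ((isUnit_iff_isUnit_det L).mp hL.isUnit))
  have hWdet := SymplecticGroup.symplectic_det hW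
  refine ⟨-(Y * M⁻¹), L, W⁻¹ * S, hP, hLsymm, hL,
    isSymplecticMat_iff.mpr (mul_mem (SymplecticGroup.nonsing_inv_mem hW) hSG), ?_,
    (mul_nonsing_inv_cancel_left _ _ hWdet).symm⟩
  exact transpose_mul_self_eq_one_of_mul_transpose_eq hWdet
    (hSSt.trans (fromBlocks_eq_VP_mul_ML_mul_transpose hG hMsymm hMdet hLsymm hLL))

namespace PreIwasawaDecomp

variable {n : ℕ} {A B C D P L : Matrix (Fin n) (Fin n) ℝ}
  {R : Matrix (Fin n ⊕ Fin n) (Fin n ⊕ Fin n) ℝ}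

theorem isUnit_det (h : PreIwasawaDecomp A B C D (P, L, R)) : IsUnit L.det :=
  (isUnit_iff_isUnit_det L).mp h.2.2.1.isUnit

theorem mul_transpose_self_eq (h : PreIwasawaDecomp A B C D (P, L, R)) :
    fromBlocks A B C D * (fromBlocks A B C D)ᵀ = VP P * ML L * (VP P * ML L)ᵀ := by
  obtain ⟨-, -, -, -, hRo, hS⟩ := h
  rw [hS, transpose_mul, mul_assoc, ← mul_assoc R, mul_eq_one_comm.mp hRo, one_mul]

theorem blocks_mul_transpose_eq (h : PreIwasawaDecomp A B C D (P, L, R)) :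
    A * Aᵀ + B * Bᵀ = L⁻¹ * L⁻¹ ∧ C * Aᵀ + D * Bᵀ = -(P * (L⁻¹ * L⁻¹)) := by
  have hSSt := h.mul_transpose_self_eq
  rw [fromBlocks_mul_transpose_self, VP_mul_ML_mul_transpose h.1 h.2.1] at hSSt
  obtain ⟨h₁₁, -, h₂₁, -⟩ := fromBlocks_inj.mp hSSt
  exact ⟨h₁₁, h₂₁⟩

theorem mul_self_eq (h : PreIwasawaDecomp A B C D (P, L, R)) :
    L * L = (A * Aᵀ + B * Bᵀ)⁻¹ := by
  rw [h.blocks_mul_transpose_eq.1, Matrix.mul_inv_rev, nonsing_inv_nonsing_inv _ h.isUnit_det]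

theorem eq_neg_mul_inv (h : PreIwasawaDecomp A B C D (P, L, R)) :
    P = -((C * Aᵀ + D * Bᵀ) * (A * Aᵀ + B * Bᵀ)⁻¹) := by
  rw [← h.mul_self_eq, h.blocks_mul_transpose_eq.2, neg_mul, neg_neg, mul_assoc, mul_assoc,
    nonsing_inv_mul_cancel_left _ _ h.isUnit_det, nonsing_inv_mul _ h.isUnit_det, mul_one]

theorem eq_fromBlocks (h : PreIwasawaDecomp A B C D (P, L, R)) :
    R = fromBlocks (L * A) (L * B) (-(L * B)) (L * A) := by
  have hL := h.isUnit_det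
  obtain ⟨-, -, -, hR, hRo, hS⟩ := h
  obtain ⟨U, V, rfl⟩ := exists_eq_fromBlocks_of_commute_J
    (SymplecticGroup.commute_J_of_transpose_mul_self_eq_one (isSymplecticMat_iff.mp hR) hRo)
  rw [VP_mul_ML, fromBlocks_multiply] at hS
  obtain ⟨hA, hB, -, -⟩ := fromBlocks_inj.mp hS
  simp only [Matrix.zero_mul, add_zero] at hA hB
  rw [hA, hB, mul_nonsing_inv_cancel_left _ _ hL, mul_nonsing_inv_cancel_left _ _ hL]

end PreIwasawaDecomp

theorem pre_iwasawa_decomposition_general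
    (n : ℕ) (A B C D : Matrix (Fin n) (Fin n) ℝ)
    (hS : IsSymplecticMat (fromBlocks A B C D)) :
    (∃! PLR : Matrix (Fin n) (Fin n) ℝ × Matrix (Fin n) (Fin n) ℝ ×
        Matrix (Fin n ⊕ Fin n) (Fin n ⊕ Fin n) ℝ, PreIwasawaDecomp A B C D PLR) ∧
      ∀ P L : Matrix (Fin n) (Fin n) ℝ, ∀ R : Matrix (Fin n ⊕ Fin n) (Fin n ⊕ Fin n) ℝ,
        PreIwasawaDecomp A B C D (P, L, R) →
          L * L = (A * Aᵀ + B * Bᵀ)⁻¹ ∧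
          P = -((C * Aᵀ + D * Bᵀ) * (A * Aᵀ + B * Bᵀ)⁻¹) ∧
          R = fromBlocks (L * A) (L * B) (-(L * B)) (L * A) := by
  refine ⟨?_, fun P L R h => ⟨h.mul_self_eq, h.eq_neg_mul_inv, h.eq_fromBlocks⟩⟩
  obtain ⟨P₀, L₀, R₀, h₀⟩ := exists_preIwasawaDecomp hS
  refine ⟨(P₀, L₀, R₀), h₀, fun ⟨P, L, R⟩ h => ?_⟩
  have hL : L = L₀ :=
    h.2.2.1.eq_of_mul_self_eq h₀.2.2.1 (h.mul_self_eq.trans h₀.mul_self_eq.symm)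
  rw [h.eq_fromBlocks, h₀.eq_fromBlocks, hL, h.eq_neg_mul_inv, ← h₀.eq_neg_mul_inv]

/-- Pre-Iwasawa decomposition: every symplectic matrix `S = [[A,B],[C,D]]` can be written in a
unique way as `S = V_P M_L R` with `P` symmetric, `L` symmetric positive definite, and `R`
symplectic and orthogonal; moreover `L = (AAᵀ + BBᵀ)^{−1/2}` (i.e. `L² = (AAᵀ + BBᵀ)⁻¹`),
`P = −(CAᵀ + DBᵀ)(AAᵀ + BBᵀ)⁻¹`, and `R = [[U, V],[−V, U]]` with `U = LA`, `V = LB`. -/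
theorem pre_iwasawa_decomposition
    (n : ℕ) (hn : 1 ≤ n) (A B C D : Matrix (Fin n) (Fin n) ℝ)
    (hS : IsSymplecticMat (fromBlocks A B C D)) :
    (∃! PLR : Matrix (Fin n) (Fin n) ℝ × Matrix (Fin n) (Fin n) ℝ ×
        Matrix (Fin n ⊕ Fin n) (Fin n ⊕ Fin n) ℝ, PreIwasawaDecomp A B C D PLR) ∧
      ∀ P L : Matrix (Fin n) (Fin n) ℝ, ∀ R : Matrix (Fin n ⊕ Fin n) (Fin n ⊕ Fin n) ℝ,
        PreIwasawaDecomp A B C D (P, L, R) →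
          L * L = (A * Aᵀ + B * Bᵀ)⁻¹ ∧
          P = -((C * Aᵀ + D * Bᵀ) * (A * Aᵀ + B * Bᵀ)⁻¹) ∧
          R = fromBlocks (L * A) (L * B) (-(L * B)) (L * A) :=
  pre_iwasawa_decomposition_general n A B C D hS
end
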